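/- Let ρ be a positive definite operator on a finite-dimensional Hilbert space 𝒦, and P an orthogonal projection with P ≠ 0 and P ≠ I. Then for i ∈ {0,1}, tr(ρ⊗ρ · R_{ii}) > 0, where R_{ii} = (1/2)[I-(-1)^i T][P⊗(I-P)][I-(-1)^i T] and T is the swap on 𝒦⊗𝒦. -/

import Mathlib

open Matrix Kronecker ComplexOrder

/-- The swap (exchange) operator on `𝒦 ⊗ 𝒦`. -/
def swapMatrix (m : Type*) [Fintype m] [DecidableEq m] : Matrix (m × m) (m × m) ℂ :=
  Matrix.of fun p q => if p.1 = q.2 ∧ p.2 = q.1 then 1 else 0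

/-- `R_{ij} := (1/2)[I - (-1)^i T][P⊗(I-P)][I - (-1)^j T]`. -/
noncomputable def Rop {m : Type*} [Fintype m] [DecidableEq m]
    (P : Matrix m m ℂ) (i j : Fin 2) : Matrix (m × m) (m × m) ℂ :=
  (2 : ℂ)⁻¹ • ((1 - ((-1 : ℂ)) ^ (i : ℕ) • swapMatrix m) * (P ⊗ₖ (1 - P)) *
    (1 - ((-1 : ℂ)) ^ (j : ℕ) • swapMatrix m))

/-!
Write `B_i = [P⊗(I-P)][I-(-1)^i T]`. Since `T` is self-adjoint and `P⊗(I-P)` is an orthogonal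
projection, `R_ii = ½ B_iᴴ B_i`, so `tr(ρ⊗ρ · R_ii) = ½ tr(B_i (ρ⊗ρ) B_iᴴ)`, which is positive
as soon as `B_i ≠ 0` because `ρ⊗ρ` is positive definite. Finally `B_i ≠ 0` since
`B_i [P⊗(I-P)] = P⊗(I-P)`: the swap turns `P⊗(I-P)` into `(I-P)⊗P`, which annihilates it.
-/

theorem Matrix.PosDef.re_trace_mul_conjTranspose_mul_pos {l n 𝕜 : Type*} [Fintype l] [Fintype n]
    [RCLike 𝕜] {σ : Matrix n n 𝕜} (hσ : σ.PosDef) {B : Matrix l n 𝕜} (hB : B ≠ 0) :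
    0 < RCLike.re (σ * (Bᴴ * B)).trace := by
  obtain ⟨k, hk⟩ := Function.ne_iff.mp hB
  have hdiag : ∀ j, (B * σ * Bᴴ) j j = star (star (B j)) ⬝ᵥ σ *ᵥ star (B j) := fun j => by
    simp only [star_star, mul_apply, mulVec, dotProduct, conjTranspose_apply, Pi.star_apply,
      Finset.sum_mul, Finset.mul_sum]
    rw [Finset.sum_comm]
    exact Finset.sum_congr rfl fun _ _ => Finset.sum_congr rfl fun _ _ => by ring
  rw [← Matrix.mul_assoc, trace_mul_cycle, trace, map_sum]
  refine Finset.sum_pos' (fun j _ => ?_) ⟨k, Finset.mem_univ _, ?_⟩ <;> rw [diag_apply, hdiag]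
  · exact hσ.posSemidef.re_dotProduct_nonneg _
  · exact hσ.re_dotProduct_pos (star_ne_zero.mpr hk)

theorem Matrix.kronecker_ne_zero {R l m n p : Type*} [MulZeroClass R] [NoZeroDivisors R]
    {A : Matrix l m R} {B : Matrix n p R} (hA : A ≠ 0) (hB : B ≠ 0) : A ⊗ₖ B ≠ 0 := by
  obtain ⟨i, j, hij⟩ : ∃ i j, A i j ≠ 0 := by simpa [← Matrix.ext_iff] using hA
  obtain ⟨k, k', hkk'⟩ : ∃ k k', B k k' ≠ 0 := by simpa [← Matrix.ext_iff] using hB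
  intro h
  simpa [hij, hkk'] using congr_fun₂ h (i, k) (j, k')

section Swap

variable {m : Type*} [Fintype m] [DecidableEq m]

theorem swapMatrix_eq_prodComm_toMatrix :
    swapMatrix m = (Equiv.prodComm m m).toPEquiv.toMatrix := by
  ext p q
  simp only [swapMatrix, of_apply, PEquiv.toMatrix_apply, Equiv.toPEquiv_apply, Option.mem_def,
    Option.some.injEq, Equiv.prodComm_apply, Prod.ext_iff, Prod.fst_swap, Prod.snd_swap]
  exact if_congr (by tauto) rfl rfl

theorem conjTranspose_swapMatrix : (swapMatrix m)ᴴ = swapMatrix m := by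
  ext p q
  simp only [swapMatrix, conjTranspose_apply, of_apply, apply_ite star, star_one, star_zero]
  exact if_congr (by tauto) rfl rfl

theorem swapMatrix_mul_kronecker (X Y : Matrix m m ℂ) :
    swapMatrix m * (X ⊗ₖ Y) = (Y ⊗ₖ X) * swapMatrix m := by
  ext p q
  simp [swapMatrix_eq_prodComm_toMatrix, PEquiv.toMatrix_toPEquiv_mul,
    PEquiv.mul_toMatrix_toPEquiv, mul_comm]

end Swap

section Projection

variable {m : Type*} [Fintype m] [DecidableEq m]

noncomputable def ropFactor (P : Matrix m m ℂ) (i : Fin 2) : Matrix (m × m) (m × m) ℂ :=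
  (P ⊗ₖ (1 - P)) * (1 - ((-1 : ℂ)) ^ (i : ℕ) • swapMatrix m)

variable {P : Matrix m m ℂ}

theorem Rop_eq_conjTranspose_mul (hPadj : Pᴴ = P) (hPproj : P * P = P) (i j : Fin 2) :
    Rop P i j = (2 : ℂ)⁻¹ • ((ropFactor P i)ᴴ * ropFactor P j) := by
  have hK : (P ⊗ₖ (1 - P))ᴴ = P ⊗ₖ (1 - P) := by
    rw [conjTranspose_kronecker, conjTranspose_sub, conjTranspose_one, hPadj]
  have hKK : (P ⊗ₖ (1 - P)) * (P ⊗ₖ (1 - P)) = P ⊗ₖ (1 - P) := by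
    rw [← mul_kronecker_mul, hPproj, (IsIdempotentElem.one_sub hPproj).eq]
  simp only [Rop, ropFactor, conjTranspose_mul, conjTranspose_sub, conjTranspose_one,
    conjTranspose_smul, conjTranspose_swapMatrix, star_pow, star_neg, star_one, hK]
  rw [Matrix.mul_assoc _ (P ⊗ₖ _) (P ⊗ₖ _ * _), ← Matrix.mul_assoc (P ⊗ₖ _), hKK,
    Matrix.mul_assoc]

theorem ropFactor_mul_kronecker (hPproj : P * P = P) (i : Fin 2) :
    ropFactor P i * (P ⊗ₖ (1 - P)) = P ⊗ₖ (1 - P) := by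
  have hPQ : P * (1 - P) = 0 := by rw [Matrix.mul_sub, Matrix.mul_one, hPproj, sub_self]
  have hQP : (1 - P) * P = 0 := by rw [Matrix.sub_mul, Matrix.one_mul, hPproj, sub_self]
  rw [ropFactor, Matrix.mul_assoc, Matrix.sub_mul, Matrix.one_mul, Matrix.smul_mul,
    swapMatrix_mul_kronecker, Matrix.mul_sub, Matrix.mul_smul, ← Matrix.mul_assoc,
    ← mul_kronecker_mul, ← mul_kronecker_mul, hPQ, hQP, hPproj,
    (IsIdempotentElem.one_sub hPproj).eq, zero_kronecker, Matrix.zero_mul, smul_zero, sub_zero]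

theorem ropFactor_ne_zero (hPproj : P * P = P) (hP0 : P ≠ 0) (hP1 : P ≠ 1) (i : Fin 2) :
    ropFactor P i ≠ 0 := by
  intro h
  have := ropFactor_mul_kronecker hPproj i
  rw [h, Matrix.zero_mul] at this
  exact kronecker_ne_zero hP0 (sub_ne_zero.mpr hP1.symm) this.symm

end Projection

/-- for positive definite `ρ` and a nontrivial projection `P`,
`tr(ρ⊗ρ · R_{ii}) > 0` for `i ∈ {0,1}`. -/
theorem trace_Rop_pos {m : Type*} [Fintype m] [DecidableEq m]
    (ρ : Matrix m m ℂ) (hρ : ρ.PosDef)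
    (P : Matrix m m ℂ) (hPadj : Pᴴ = P) (hPproj : P * P = P)
    (hP0 : P ≠ 0) (hP1 : P ≠ 1) :
    ∀ i : Fin 2, 0 < (((ρ ⊗ₖ ρ) * Rop P i i).trace).re := by
  intro i
  have h := (hρ.kronecker hρ).re_trace_mul_conjTranspose_mul_pos
    (ropFactor_ne_zero hPproj hP0 hP1 i)
  rw [Rop_eq_conjTranspose_mul hPadj hPproj, Matrix.mul_smul, trace_smul, smul_eq_mul]
  simpa using h
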